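/- arXiv:1810.08529 — 3 statements merged into one kernel-verified Lean document; each statement's English description precedes it below -/
import Mathlib

section
/- Let A ⊆ ℝⁿ be a nonempty closed set and let a ∈ ∂A (the boundary of A). Then the hybrid subdifferential of the distance function d_A at a is contained in the convex hull of the intersection of the limiting normal cone to A at a with the unit sphere: ∂^>d_A(a) ⊆ co(N_A(a) ∩ ∂𝔹). -/
/-!
At a point `x ∉ A` where `d_A` is differentiable, let `p` be a nearest point of `A`. Along the
segment from `x` to `p` the function `d_A` decreases at unit rate, while being `1`-Lipschitz it can
decrease no faster in any unit direction; equality in Cauchy–Schwarz forces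
`∇d_A(x) = (x - p) / d_A(x)`, a unit vector and a proximal normal to `A` at `p`. When `x → a ∈ A`
the nearest points also tend to `a`, so every limit of such gradients is a unit limiting normal
at `a`, and the convex hulls compare accordingly.
-/

open Set MeasureTheory Filter Topology Metric
open scoped RealInnerProductSpace

noncomputable section

variable {H : Type*} [NormedAddCommGroup H] [InnerProductSpace ℝ H]

/-- The proximal normal cone to `A` at `x`. -/
def proxNormalCone (A : Set H) (x : H) : Set H :=
  {η | ∃ M > 0, ∀ y ∈ A, ⟪η, y - x⟫ ≤ M * ‖y - x‖ ^ 2}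

/-- The limiting normal cone to `A` at `x`. -/
def limitingNormalCone (A : Set H) (x : H) : Set H :=
  {η | ∃ xs ηs : ℕ → H, (∀ i, xs i ∈ A) ∧ (∀ i, ηs i ∈ proxNormalCone A (xs i)) ∧
    Tendsto xs atTop (𝓝 x) ∧ Tendsto ηs atTop (𝓝 η)}

/-- The hybrid subdifferential of `h` at `x`. -/
def hybridSubdiff [CompleteSpace H] (h : H → ℝ) (x : H) : Set H :=
  convexHull ℝ {γ | ∃ xs : ℕ → H, Tendsto xs atTop (𝓝 x) ∧
    Tendsto (fun i => h (xs i)) atTop (𝓝 (h x)) ∧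
    (∀ i, 0 < h (xs i)) ∧ (∀ i, DifferentiableAt ℝ h (xs i)) ∧
    Tendsto (fun i => gradient h (xs i)) atTop (𝓝 γ)}

theorem infDist_lineMap_of_infDist_eq_dist {E : Type*} [NormedAddCommGroup E] [NormedSpace ℝ E]
    {A : Set E} {x p : E} (hp : p ∈ A) (hxp : infDist x A = dist x p) {s : ℝ} (hs₀ : 0 ≤ s)
    (hs₁ : s ≤ 1) : infDist (AffineMap.lineMap p x s) A = s * infDist x A := by
  refine le_antisymm ?_ ?_
  · calc infDist (AffineMap.lineMap p x s) A ≤ dist (AffineMap.lineMap p x s) p :=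
          infDist_le_dist_of_mem hp
      _ = s * infDist x A := by
          rw [dist_lineMap_left, Real.norm_of_nonneg hs₀, dist_comm, hxp]
  · have htriangle := infDist_le_infDist_add_dist (x := x) (y := AffineMap.lineMap p x s) (s := A)
    rw [dist_comm, dist_lineMap_right, Real.norm_of_nonneg (by linarith), dist_comm, ← hxp]
      at htriangle
    linarith

theorem norm_inv_infDist_smul_sub {E : Type*} [NormedAddCommGroup E] [NormedSpace ℝ E]
    {A : Set E} {x p : E} (hxp : infDist x A = dist x p) (hpos : 0 < infDist x A) :
    ‖(infDist x A)⁻¹ • (x - p)‖ = 1 := by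
  rw [hxp, dist_eq_norm]
  exact norm_smul_inv_norm (sub_ne_zero.2 (dist_pos.1 (hxp ▸ hpos)))

theorem tendsto_of_infDist_eq_dist {α ι : Type*} [PseudoMetricSpace α] {l : Filter ι}
    {A : Set α} {a : α} (ha : a ∈ A) {x p : ι → α} (hx : Tendsto x l (𝓝 a))
    (hxp : ∀ i, infDist (x i) A = dist (x i) (p i)) : Tendsto p l (𝓝 a) := by
  rw [tendsto_iff_dist_tendsto_zero] at hx ⊢
  refine squeeze_zero (fun _ => dist_nonneg) (fun i => ?_) (by simpa using hx.const_mul 2)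
  calc dist (p i) a ≤ dist (x i) (p i) + dist (x i) a := dist_triangle_left _ _ _
    _ ≤ 2 * dist (x i) a := by
        rw [← hxp]; linarith [infDist_le_dist_of_mem (x := x i) ha]

theorem smul_mem_proxNormalCone {A : Set H} {p η : H} {c : ℝ} (hc : 0 < c)
    (hη : η ∈ proxNormalCone A p) : c • η ∈ proxNormalCone A p := by
  obtain ⟨M, hM, hη⟩ := hη
  refine ⟨c * M, mul_pos hc hM, fun y hy => ?_⟩
  rw [real_inner_smul_left, mul_assoc]
  exact mul_le_mul_of_nonneg_left (hη y hy) hc.le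

theorem sub_mem_proxNormalCone_of_infDist_eq_dist {A : Set H} {x p : H}
    (hxp : infDist x A = dist x p) : x - p ∈ proxNormalCone A p := by
  refine ⟨1 / 2, one_half_pos, fun y hy => ?_⟩
  have hclosest : ‖x - p‖ ≤ ‖x - y‖ := by
    rw [← dist_eq_norm, ← dist_eq_norm, ← hxp]
    exact infDist_le_dist_of_mem hy
  have hexpand : ‖x - y‖ ^ 2 = ‖x - p‖ ^ 2 - 2 * ⟪x - p, y - p⟫ + ‖y - p‖ ^ 2 := by
    rw [← norm_sub_sq_real, sub_sub_sub_cancel_right]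
  nlinarith [pow_le_pow_left₀ (norm_nonneg _) hclosest 2]

section Gradient

variable [CompleteSpace H]

theorem norm_gradient_le_of_lipschitzWith_one {f : H → ℝ} (hf : LipschitzWith 1 f) (x : H) :
    ‖gradient f x‖ ≤ 1 := by
  rw [← (InnerProductSpace.toDual ℝ H).norm_map, toDual_gradient]
  simpa using norm_fderiv_le_of_lipschitz ℝ hf (x₀ := x)

theorem gradient_eq_of_lipschitzWith_one {f : H → ℝ} {x u : H} (hf : LipschitzWith 1 f)
    (hdiff : DifferentiableAt ℝ f x) (hu : ‖u‖ = 1)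
    (hdescent : ∀ᶠ t in 𝓝[≥] (0 : ℝ), f (x - t • u) = f x - t) : gradient f x = u := by
  have hline : HasDerivAt (fun t : ℝ => f (x - t • u)) ⟪gradient f x, -u⟫ 0 := by
    have hpath : HasDerivAt (fun t : ℝ => x - t • u) (-u) 0 := by
      simpa using ((hasDerivAt_id (0 : ℝ)).smul_const u).const_sub x
    rw [inner_gradient_left]
    exact (by simpa using hdiff.hasFDerivAt : HasFDerivAt f (fderiv ℝ f x) (x - (0 : ℝ) • u))
      |>.comp_hasDerivAt 0 hpath
  have hunit_rate : HasDerivWithinAt (fun t : ℝ => f (x - t • u)) (-1) (Ici 0) 0 :=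
    (((hasDerivAt_id (0 : ℝ)).const_sub (f x)).hasDerivWithinAt.congr_of_eventuallyEq hdescent
      (by simp))
  have hinner : ⟪gradient f x, u⟫ = 1 := by
    have := (uniqueDiffWithinAt_Ici 0).eq_deriv _ hline.hasDerivWithinAt hunit_rate
    rw [inner_neg_right] at this
    linarith
  have hnorm : ‖gradient f x‖ = 1 := by
    refine le_antisymm (norm_gradient_le_of_lipschitzWith_one hf x) ?_
    simpa [hinner, hu] using real_inner_le_norm (gradient f x) u
  exact (inner_eq_one_iff_of_norm_eq_one hnorm hu).1 hinner

theorem gradient_infDist_eq {A : Set H} {x p : H} (hp : p ∈ A) (hxp : infDist x A = dist x p)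
    (hpos : 0 < infDist x A) (hdiff : DifferentiableAt ℝ (fun y => infDist y A) x) :
    gradient (fun y => infDist y A) x = (infDist x A)⁻¹ • (x - p) := by
  refine gradient_eq_of_lipschitzWith_one (lipschitz_infDist_pt A) hdiff
    (norm_inv_infDist_smul_sub hxp hpos) ?_
  filter_upwards [Ico_mem_nhdsGE hpos] with t ⟨ht₀, htd⟩
  have hsegment : x - t • (infDist x A)⁻¹ • (x - p) =
      AffineMap.lineMap p x (1 - t / infDist x A) := by
    rw [AffineMap.lineMap_apply_module', smul_smul, sub_smul, one_smul, div_eq_mul_inv]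
    abel
  rw [hsegment, infDist_lineMap_of_infDist_eq_dist hp hxp (by
      rw [sub_nonneg, div_le_one hpos]; exact htd.le) (by
      rw [sub_le_self_iff]; positivity)]
  field_simp

theorem gradient_infDist_mem_proxNormalCone_inter_sphere {A : Set H} {x p : H} (hp : p ∈ A)
    (hxp : infDist x A = dist x p) (hpos : 0 < infDist x A)
    (hdiff : DifferentiableAt ℝ (fun y => infDist y A) x) :
    gradient (fun y => infDist y A) x ∈ proxNormalCone A p ∩ sphere 0 1 := by
  rw [gradient_infDist_eq hp hxp hpos hdiff]
  exact ⟨smul_mem_proxNormalCone (inv_pos.2 hpos) (sub_mem_proxNormalCone_of_infDist_eq_dist hxp),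
    mem_sphere_zero_iff_norm.2 (norm_inv_infDist_smul_sub hxp hpos)⟩

end Gradient

theorem hybridSubdiff_dist_subset_convexHull_limitingNormalCone_general
    {n : ℕ} (A : Set (EuclideanSpace ℝ (Fin n))) (hA : IsClosed A)
    (a : EuclideanSpace ℝ (Fin n)) (ha : a ∈ frontier A) :
    hybridSubdiff (fun y => infDist y A) a ⊆
      convexHull ℝ (limitingNormalCone A a ∩ sphere (0 : EuclideanSpace ℝ (Fin n)) 1) := by
  have haA : a ∈ A := hA.closure_eq ▸ frontier_subset_closure ha
  refine convexHull_mono ?_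
  rintro γ ⟨x, hx, -, hpos, hdiff, hgrad⟩
  choose p hpA hxp using fun i => hA.exists_infDist_eq_dist ⟨a, haA⟩ (x i)
  have hunit i := gradient_infDist_mem_proxNormalCone_inter_sphere (hpA i) (hxp i) (hpos i)
    (hdiff i)
  exact ⟨⟨p, _, hpA, fun i => (hunit i).1, tendsto_of_infDist_eq_dist haA hx hxp, hgrad⟩,
    isClosed_sphere.mem_of_tendsto hgrad (Eventually.of_forall fun i => (hunit i).2)⟩

/-- Proposition 2.1(i): for a nonempty closed set `A ⊆ ℝⁿ` and `a ∈ ∂A`, the hybrid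
subdifferential of the distance function `d_A` at `a` is contained in the convex hull
of the unit limiting normal vectors: `∂^> d_A(a) ⊆ co (N_A(a) ∩ ∂𝔹)`. -/
theorem hybridSubdiff_dist_subset_convexHull_limitingNormalCone
    {n : ℕ} (A : Set (EuclideanSpace ℝ (Fin n))) (hA : IsClosed A) (hAne : A.Nonempty)
    (a : EuclideanSpace ℝ (Fin n)) (ha : a ∈ frontier A) :
    hybridSubdiff (fun y => infDist y A) a ⊆
      convexHull ℝ (limitingNormalCone A a ∩ sphere (0 : EuclideanSpace ℝ (Fin n)) 1) :=
  hybridSubdiff_dist_subset_convexHull_limitingNormalCone_general A hA a ha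
end
end

section
/- Let A ⊆ ℝⁿ be a nonempty closed set and y ∈ ∂A. If there exists c > 0 such that γ₁ · γ₂ > c for all γ₁, γ₂ ∈ ∂^>d_A(y) (the hybrid subdifferential of the distance function at y), then the Clarke tangent cone to A at y has nonempty interior: int T_A(y) ≠ ∅. -/
open Set MeasureTheory Filter Topology Metric
open scoped RealInnerProductSpace

noncomputable section

variable {H : Type*} [NormedAddCommGroup H] [InnerProductSpace ℝ H]

/-- The Clarke tangent cone to `A` at `x`. -/
def clarkeTangentCone (A : Set H) (x : H) : Set H :=
  {ξ | ∀ (xs : ℕ → H) (ts : ℕ → ℝ), (∀ i, xs i ∈ A) → Tendsto xs atTop (𝓝 x) →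
      (∀ i, 0 < ts i) → Tendsto ts atTop (𝓝 0) →
      ∃ as : ℕ → H, (∀ i, as i ∈ A) ∧
        Tendsto (fun i => (ts i)⁻¹ • (as i - xs i)) atTop (𝓝 ξ)}

lemma norm_smul_add_le' {E : Type*} [NormedAddCommGroup E] [InnerProductSpace ℝ E]
    (u h : E) (r : ℝ) (hu : ‖u‖ = 1) (hr : 0 < r) (hh : ‖h‖ ≤ r / 2) :
    ‖r • u + h‖ ≤ r + ⟪u, h⟫ + ‖h‖ ^ 2 / r := by
  have hip := abs_le.1 (by simpa [hu] using abs_real_inner_le_norm u h : |⟪u, h⟫| ≤ ‖h‖)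
  have hsq : ‖r • u + h‖ ^ 2 = r ^ 2 + 2 * (r * ⟪u, h⟫) + ‖h‖ ^ 2 := by
    rw [norm_add_sq_real, real_inner_smul_left, norm_smul, hu, Real.norm_eq_abs,
      abs_of_pos hr]
    ring
  have hq0 : 0 ≤ ‖h‖ ^ 2 / r := by positivity
  have hq : ‖h‖ ^ 2 = ‖h‖ ^ 2 / r * r := (div_mul_cancel₀ _ hr.ne').symm
  have hb2 : 0 ≤ r + 2 * ⟪u, h⟫ := by nlinarith [hip.1]
  have hB : 0 ≤ r + ⟪u, h⟫ + ‖h‖ ^ 2 / r := by nlinarith [hip.1]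
  have h2 : ‖r • u + h‖ ^ 2 ≤ (r + ⟪u, h⟫ + ‖h‖ ^ 2 / r) ^ 2 := by
    nlinarith [mul_nonneg hq0 hb2, sq_nonneg (⟪u, h⟫), sq_nonneg (‖h‖ ^ 2 / r)]
  calc ‖r • u + h‖ = Real.sqrt (‖r • u + h‖ ^ 2) := (Real.sqrt_sq (norm_nonneg _)).symm
    _ ≤ Real.sqrt ((r + ⟪u, h⟫ + ‖h‖ ^ 2 / r) ^ 2) := Real.sqrt_le_sqrt h2
    _ = _ := Real.sqrt_sq hB

lemma hasGradientAt_infDist_mid {E : Type*} [NormedAddCommGroup E]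
    [InnerProductSpace ℝ E] [CompleteSpace E] {A : Set E} {x s : E}
    (hs : s ∈ A) (hd : infDist x A = dist x s) (hpos : 0 < dist x s) :
    HasGradientAt (fun z => infDist z A) (‖x - s‖⁻¹ • (x - s))
        (x - (dist x s / 2) • (‖x - s‖⁻¹ • (x - s))) ∧
      infDist (x - (dist x s / 2) • (‖x - s‖⁻¹ • (x - s))) A = dist x s / 2 := by
  set d := dist x s with hdd
  set u : E := ‖x - s‖⁻¹ • (x - s) with hud
  set z : E := x - (d / 2) • u with hzd
  have hxs : ‖x - s‖ = d := (dist_eq_norm x s).symm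
  have hne : ‖x - s‖ ≠ 0 := by rw [hxs]; exact hpos.ne'
  have hu : ‖u‖ = 1 := by
    rw [hud, norm_smul, norm_inv, norm_norm, inv_mul_cancel₀ hne]
  have hdu : d • u = x - s := by
    rw [hud, smul_smul, ← hxs, mul_inv_cancel₀ hne, one_smul]
  have key : ∀ h : E, ‖h‖ ≤ d / 4 → |infDist (z + h) A - (d / 2 + ⟪u, h⟫)| ≤ 2 * ‖h‖ ^ 2 / d := by
    intro h hh
    have hr : (0 : ℝ) < d / 2 := by linarith
    have hh2 : ‖h‖ ≤ d / 2 / 2 := by linarith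
    have hupper : infDist (z + h) A ≤ d / 2 + ⟪u, h⟫ + 2 * ‖h‖ ^ 2 / d := by
      have h1 : infDist (z + h) A ≤ dist (z + h) s := infDist_le_dist_of_mem hs
      have hx : x = s + d • u := by rw [hdu]; abel
      have h2 : z + h - s = (d / 2) • u + h := by
        rw [hzd, hx]; module
      rw [dist_eq_norm, h2] at h1
      have h3 := norm_smul_add_le' u h (d / 2) hu hr hh2
      have h4 : ‖h‖ ^ 2 / (d / 2) = 2 * ‖h‖ ^ 2 / d := by
        field_simp
      linarith [h3, h4.le]
    have hlower : d / 2 + ⟪u, h⟫ - 2 * ‖h‖ ^ 2 / d ≤ infDist (z + h) A := by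
      have h1 : infDist x A ≤ infDist (z + h) A + dist x (z + h) := infDist_le_infDist_add_dist
      have h2 : x - (z + h) = (d / 2) • u + (-h) := by rw [hzd]; module
      rw [dist_eq_norm, h2] at h1
      have hh3 : ‖(-h : E)‖ ≤ d / 2 / 2 := by rwa [norm_neg]
      have h3 := norm_smul_add_le' u (-h) (d / 2) hu hr hh3
      rw [inner_neg_right, norm_neg] at h3
      have h4 : ‖h‖ ^ 2 / (d / 2) = 2 * ‖h‖ ^ 2 / d := by field_simp
      rw [hd] at h1
      linarith [h3, h4.le]
    rw [abs_le]; constructor <;> linarith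
  have hz : infDist z A = d / 2 := by
    have := key 0 (by simp; linarith)
    simp only [add_zero, inner_zero_right, norm_zero] at this
    have h0 : |infDist z A - (d / 2 + 0)| ≤ 0 := by simpa using this
    have := abs_le.1 h0
    linarith [this.1, this.2]
  refine ⟨?_, hz⟩
  rw [hasGradientAt_iff_hasFDerivAt, hasFDerivAt_iff_isLittleO_nhds_zero]
  rw [Asymptotics.isLittleO_iff]
  intro ε hε
  have hrad : (0:ℝ) < min (d / 4) (ε * d / 2) := by positivity
  filter_upwards [Metric.ball_mem_nhds (0 : E) hrad] with h hh
  rw [mem_ball_zero_iff] at hh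
  have hh1 : ‖h‖ ≤ d / 4 := (lt_min_iff.1 hh).1.le
  have hh2 : ‖h‖ ≤ ε * d / 2 := (lt_min_iff.1 hh).2.le
  have hk := key h hh1
  have htd : (InnerProductSpace.toDual ℝ E (‖x - s‖⁻¹ • (x - s))) h = ⟪u, h⟫ := by
    rw [InnerProductSpace.toDual_apply_apply]
  rw [Real.norm_eq_abs, htd, hz]
  have hbound : 2 * ‖h‖ ^ 2 / d ≤ ε * ‖h‖ := by
    rw [div_le_iff₀ hpos]
    nlinarith [norm_nonneg h]
  calc |infDist (z + h) A - d / 2 - ⟪u, h⟫| = |infDist (z + h) A - (d / 2 + ⟪u, h⟫)| := by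
        ring_nf
    _ ≤ 2 * ‖h‖ ^ 2 / d := hk
    _ ≤ ε * ‖h‖ := hbound

lemma exists_limit_dir {n : ℕ} {A : Set (EuclideanSpace ℝ (Fin n))}
    (hA : IsClosed A) (hAne : A.Nonempty) {y : EuclideanSpace ℝ (Fin n)} (hyA : y ∈ A)
    (xk sk : ℕ → EuclideanSpace ℝ (Fin n))
    (hxkA : ∀ k, xk k ∉ A) (hskA : ∀ k, sk k ∈ A)
    (hnear : ∀ k, infDist (xk k) A = dist (xk k) (sk k))
    (hxky : Tendsto xk atTop (𝓝 y)) :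
    ∃ γ, ‖γ‖ = 1 ∧ (∃ φ : ℕ → ℕ, StrictMono φ ∧
        Tendsto (fun k => ‖xk (φ k) - sk (φ k)‖⁻¹ • (xk (φ k) - sk (φ k))) atTop (𝓝 γ)) ∧
      γ ∈ {γ | ∃ xs : ℕ → EuclideanSpace ℝ (Fin n), Tendsto xs atTop (𝓝 y) ∧
        Tendsto (fun i => infDist (xs i) A) atTop (𝓝 (infDist y A)) ∧
        (∀ i, 0 < infDist (xs i) A) ∧
        (∀ i, DifferentiableAt ℝ (fun z => infDist z A) (xs i)) ∧
        Tendsto (fun i => gradient (fun z => infDist z A) (xs i)) atTop (𝓝 γ)} := by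
  have hdpos : ∀ k, 0 < dist (xk k) (sk k) := by
    intro k
    rcases eq_or_lt_of_le (dist_nonneg (x := xk k) (y := sk k)) with h | h
    · exact absurd ((dist_eq_zero.1 h.symm) ▸ hskA k) (hxkA k)
    · exact h
  set u : ℕ → EuclideanSpace ℝ (Fin n) := fun k => ‖xk k - sk k‖⁻¹ • (xk k - sk k) with hu
  have hun : ∀ k, ‖u k‖ = 1 := by
    intro k
    have hne : ‖xk k - sk k‖ ≠ 0 := by
      rw [← dist_eq_norm]; exact (hdpos k).ne'
    rw [hu]; simp only
    rw [norm_smul, norm_inv, norm_norm, inv_mul_cancel₀ hne]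
  have hmem : ∀ k, u k ∈ closedBall (0 : EuclideanSpace ℝ (Fin n)) 1 := fun k => by
    rw [mem_closedBall_zero_iff, hun k]
  obtain ⟨γ, -, φ, hφ, hγ⟩ := tendsto_subseq_of_bounded isBounded_closedBall hmem
  have hγn : ‖γ‖ = 1 := by
    have h1 : Tendsto (fun k => ‖u (φ k)‖) atTop (𝓝 ‖γ‖) := (continuous_norm.tendsto γ).comp hγ
    have h2 : Tendsto (fun k => ‖u (φ k)‖) atTop (𝓝 1) := by
      simp only [hun]; exact tendsto_const_nhds
    exact tendsto_nhds_unique h1 h2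
  refine ⟨γ, hγn, ⟨φ, hφ, hγ⟩, ?_⟩
  set xs : ℕ → EuclideanSpace ℝ (Fin n) :=
    fun k => xk (φ k) - (dist (xk (φ k)) (sk (φ k)) / 2) • u (φ k) with hxs
  have hgrad := fun k => (hasGradientAt_infDist_mid (hskA (φ k)) (hnear (φ k)) (hdpos (φ k))).1
  have hval := fun k => (hasGradientAt_infDist_mid (hskA (φ k)) (hnear (φ k)) (hdpos (φ k))).2
  have hdy : ∀ k, dist (xk k) (sk k) ≤ dist (xk k) y := by
    intro k; rw [← hnear k]; exact infDist_le_dist_of_mem hyA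
  have hdistxs : ∀ k, dist (xs k) (xk (φ k)) = dist (xk (φ k)) (sk (φ k)) / 2 := by
    intro k
    rw [hxs]; simp only
    rw [dist_eq_norm, sub_sub_cancel_left, norm_neg, norm_smul, hun, mul_one,
      Real.norm_eq_abs, abs_of_nonneg (by linarith [hdpos (φ k)])]
  have hxky' : Tendsto (fun k => dist (xk (φ k)) y) atTop (𝓝 0) :=
    tendsto_iff_dist_tendsto_zero.1 (hxky.comp hφ.tendsto_atTop)
  have hxsy : Tendsto xs atTop (𝓝 y) := by
    rw [tendsto_iff_dist_tendsto_zero]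
    apply squeeze_zero (fun k => dist_nonneg) (g := fun k => (3/2) * dist (xk (φ k)) y)
    · intro k
      calc dist (xs k) y ≤ dist (xs k) (xk (φ k)) + dist (xk (φ k)) y := dist_triangle _ _ _
        _ ≤ (3/2) * dist (xk (φ k)) y := by
            rw [hdistxs k]; linarith [hdy (φ k)]
    · simpa using hxky'.const_mul (3/2)
  refine ⟨xs, hxsy, ?_, ?_, ?_, ?_⟩
  · rw [infDist_zero_of_mem hyA]
    apply squeeze_zero (fun k => infDist_nonneg) (g := fun k => dist (xk (φ k)) y)
    · intro k
      rw [hval k]; linarith [hdy (φ k), dist_nonneg (x := xk (φ k)) (y := sk (φ k))]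
    · exact hxky'
  · intro k; rw [hval k]; linarith [hdpos (φ k)]
  · intro k
    exact (hasGradientAt_iff_hasFDerivAt.1 (hgrad k)).differentiableAt
  · exact Tendsto.congr (fun k => ((hgrad k).gradient).symm) hγ

set_option maxHeartbeats 2000000 in
/-- Proposition 3 : if there is `c > 0` such that `γ₁ · γ₂ > c` for all
`γ₁, γ₂ ∈ ∂^> d_A(y)`, then the Clarke tangent cone `T_A(y)` has nonempty interior. -/
theorem interior_clarkeTangentCone_nonempty_of_acute_hybridSubdiff
    {n : ℕ} (A : Set (EuclideanSpace ℝ (Fin n))) (hA : IsClosed A) (hAne : A.Nonempty)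
    (y : EuclideanSpace ℝ (Fin n)) (hy : y ∈ frontier A)
    (hacute : ∃ c > (0 : ℝ), ∀ γ₁ ∈ hybridSubdiff (fun z => infDist z A) y,
      ∀ γ₂ ∈ hybridSubdiff (fun z => infDist z A) y, c < ⟪γ₁, γ₂⟫) :
    (interior (clarkeTangentCone A y)).Nonempty := by
  classical
  obtain ⟨c, hc0, hcs⟩ := hacute
  have hyA : y ∈ A := hA.closure_eq ▸ hy.1
  have hproj : ∀ x : EuclideanSpace ℝ (Fin n), ∃ s ∈ A, infDist x A = dist x s :=
    fun x => hA.exists_infDist_eq_dist hAne x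
  have hSsub : ∀ γ, γ ∈ {γ : EuclideanSpace ℝ (Fin n) |
      ∃ xs : ℕ → EuclideanSpace ℝ (Fin n), Tendsto xs atTop (𝓝 y) ∧
        Tendsto (fun i => infDist (xs i) A) atTop (𝓝 (infDist y A)) ∧
        (∀ i, 0 < infDist (xs i) A) ∧
        (∀ i, DifferentiableAt ℝ (fun z => infDist z A) (xs i)) ∧
        Tendsto (fun i => gradient (fun z => infDist z A) (xs i)) atTop (𝓝 γ)} →
      γ ∈ hybridSubdiff (fun z => infDist z A) y := by
    intro γ hγ
    exact subset_convexHull ℝ _ hγ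
  have honek : Tendsto (fun k : ℕ => 1 / ((k : ℝ) + 1)) atTop (𝓝 0) :=
    tendsto_one_div_add_atTop_nhds_zero_nat
  -- construct v
  have hfr : ∀ k : ℕ, ∃ x, x ∉ A ∧ dist x y < 1 / ((k : ℝ) + 1) := by
    intro k
    have hpos : (0:ℝ) < 1 / ((k : ℝ) + 1) := by positivity
    have hns : ¬ (ball y (1 / ((k : ℝ) + 1)) ⊆ A) := fun hsub =>
      hy.2 (mem_interior_iff_mem_nhds.2 (Filter.mem_of_superset (ball_mem_nhds y hpos) hsub))
    rw [Set.not_subset] at hns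
    obtain ⟨x, hx1, hx2⟩ := hns
    exact ⟨x, hx2, mem_ball.1 hx1⟩
  choose xk hxkA hxky using hfr
  have hxkt : Tendsto xk atTop (𝓝 y) :=
    tendsto_iff_dist_tendsto_zero.2
      (squeeze_zero (fun k => dist_nonneg) (fun k => (hxky k).le) honek)
  choose sk hskA hnear using fun k => hproj (xk k)
  obtain ⟨v, hv1, -, hvS⟩ := exists_limit_dir hA hAne hyA xk sk hxkA hskA hnear hxkt
  have hvH := hSsub v hvS
  have hcv : c < 1 := by
    have := hcs v hvH v hvH
    rwa [real_inner_self_eq_norm_sq, hv1, one_pow] at this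
  -- Step B
  have hB : ∃ δ > (0:ℝ), ∀ x s', x ∉ A → s' ∈ A → dist x y < δ → infDist x A = dist x s' →
      c ≤ ⟪‖x - s'‖⁻¹ • (x - s'), v⟫ := by
    by_contra hcon
    push_neg at hcon
    have h' := fun k : ℕ => hcon (1 / ((k : ℝ) + 1)) (by positivity)
    choose xk' sk' h1 h2 h3 h4 h5 using h'
    have hxkt' : Tendsto xk' atTop (𝓝 y) :=
      tendsto_iff_dist_tendsto_zero.2
        (squeeze_zero (fun k => dist_nonneg) (fun k => (h3 k).le) honek)
    obtain ⟨γ, -, ⟨φ, hφ, hγlim⟩, hγS⟩ :=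
      exists_limit_dir hA hAne hyA xk' sk' h1 h2 h4 hxkt'
    have hγH := hSsub γ hγS
    have hinner : Tendsto (fun k => ⟪‖xk' (φ k) - sk' (φ k)‖⁻¹ • (xk' (φ k) - sk' (φ k)), v⟫)
        atTop (𝓝 ⟪γ, v⟫) := hγlim.inner tendsto_const_nhds
    have hle : ⟪γ, v⟫ ≤ c :=
      le_of_tendsto hinner (Eventually.of_forall fun k => (h5 (φ k)).le)
    exact absurd (hcs γ hγH v hvH) (not_lt.2 hle)
  obtain ⟨δ, hδ0, hB⟩ := hB
  -- descent
  have hdesc : ∀ w : EuclideanSpace ℝ (Fin n), dist w (-v) ≤ c / 4 →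
      ∀ z, dist z y < δ → z ∉ A → ∀ t, 0 ≤ t → t ≤ c / 3 * infDist z A →
      infDist (z + t • w) A ≤ infDist z A - 3 * c / 8 * t := by
    intro w hw z hzy hzA t ht htd
    obtain ⟨s', hs', hds'⟩ := hproj z
    obtain ⟨d, u, hds'', hdpos, hu1, hdu, hBz⟩ :
        ∃ (d : ℝ) (u : EuclideanSpace ℝ (Fin n)), infDist z A = d ∧ 0 < d ∧ ‖u‖ = 1 ∧
          d • u = z - s' ∧ c ≤ ⟪u, v⟫ := by
      have hdpos : 0 < dist z s' := by
        rw [← hds']; exact (hA.notMem_iff_infDist_pos hAne).1 hzA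
      have hzs : ‖z - s'‖ = dist z s' := (dist_eq_norm z s')
      have hne : ‖z - s'‖ ≠ 0 := by rw [hzs]; exact hdpos.ne'
      refine ⟨dist z s', ‖z - s'‖⁻¹ • (z - s'), hds', hdpos, ?_, ?_,
        hB z s' hzA hs' hzy hds'⟩
      · rw [norm_smul, norm_inv, norm_norm, inv_mul_cancel₀ hne]
      · rw [smul_smul, ← hzs, mul_inv_cancel₀ hne, one_smul]
    have hwv : ‖w + v‖ ≤ c / 4 := by
      rw [dist_eq_norm, sub_neg_eq_add] at hw; exact hw
    have hnv : ‖w‖ ≤ 1 + c / 4 := by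
      have hrw : w = (w + v) + (-v) := by abel
      calc ‖w‖ = ‖(w + v) + (-v)‖ := by rw [← hrw]
        _ ≤ ‖w + v‖ + ‖(-v : EuclideanSpace ℝ (Fin n))‖ := norm_add_le _ _
        _ ≤ c / 4 + 1 := by rw [norm_neg, hv1]; linarith
        _ = 1 + c / 4 := by ring
    have huw : ⟪u, w⟫ ≤ -(3 * c / 4) := by
      have h1 : ⟪u, w + v⟫ ≤ c / 4 := by
        calc ⟪u, w + v⟫ ≤ ‖u‖ * ‖w + v‖ := real_inner_le_norm _ _
          _ ≤ c / 4 := by rw [hu1, one_mul]; exact hwv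
      have h2 : ⟪u, w⟫ = ⟪u, w + v⟫ - ⟪u, v⟫ := by rw [inner_add_right]; ring
      linarith
    rw [hds''] at htd ⊢
    have hupper : infDist (z + t • w) A ≤ ‖d • u + t • w‖ := by
      have h1 : infDist (z + t • w) A ≤ dist (z + t • w) s' := infDist_le_dist_of_mem hs'
      have h2 : z + t • w - s' = d • u + t • w := by rw [hdu]; abel
      rwa [dist_eq_norm, h2] at h1
    have hexp : ‖d • u + t • w‖ ^ 2 = d ^ 2 + 2 * (t * (d * ⟪u, w⟫)) + t ^ 2 * ‖w‖ ^ 2 := by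
      have e1 : ‖d • u‖ = d := by
        rw [norm_smul, hu1, Real.norm_eq_abs, abs_of_pos hdpos, mul_one]
      have e2 : ⟪d • u, t • w⟫ = t * (d * ⟪u, w⟫) := by
        rw [real_inner_smul_left, real_inner_smul_right]; ring
      have e3 : ‖t • w‖ = t * ‖w‖ := by
        rw [norm_smul, Real.norm_eq_abs, abs_of_nonneg ht]
      rw [norm_add_sq_real, e1, e2, e3]
      ring
    have hrem : 0 ≤ d - 3 * c / 8 * t := by nlinarith [hdpos]
    have hsq : ‖d • u + t • w‖ ^ 2 ≤ (d - 3 * c / 8 * t) ^ 2 := by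
      nlinarith [hexp, mul_nonneg ht hdpos.le, sq_nonneg t, norm_nonneg w,
        mul_le_mul_of_nonneg_left huw (mul_nonneg ht hdpos.le),
        mul_self_le_mul_self (norm_nonneg w) hnv,
        mul_le_mul_of_nonneg_left htd ht, hc0.le, hcv.le,
        mul_nonneg (mul_nonneg ht ht) hc0.le]
    have := Real.sqrt_le_sqrt hsq
    rw [Real.sqrt_sq (norm_nonneg _), Real.sqrt_sq hrem] at this
    linarith [hupper]
  -- no escape
  have hstay : ∀ w : EuclideanSpace ℝ (Fin n), dist w (-v) ≤ c / 4 →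
      ∀ x ∈ A, dist x y ≤ δ / 8 → ∀ t : ℝ, 0 ≤ t → t ≤ δ / 8 → x + t • w ∈ A := by
    intro w hw x hxA hxy t ht0 htδ
    by_contra hout
    have hwn : ‖w‖ ≤ 5 / 4 := by
      have hrw : w = (w - -v) + -v := by abel
      have : ‖w‖ ≤ dist w (-v) + ‖(-v : EuclideanSpace ℝ (Fin n))‖ := by
        rw [dist_eq_norm]
        calc ‖w‖ = ‖(w - -v) + -v‖ := by rw [← hrw]
          _ ≤ _ := norm_add_le _ _
      rw [norm_neg, hv1] at this; linarith
    set g : ℝ → ℝ := fun r => infDist (x + r • w) A with hgdef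
    have hglip : ∀ a b : ℝ, g a ≤ g b + 5 / 4 * |a - b| := by
      intro a b
      have h1 : g a ≤ g b + dist (x + a • w) (x + b • w) := infDist_le_infDist_add_dist
      have h2 : dist (x + a • w) (x + b • w) = |a - b| * ‖w‖ := by
        rw [dist_eq_norm]
        have : x + a • w - (x + b • w) = (a - b) • w := by
          rw [sub_smul]; abel
        rw [this, norm_smul, Real.norm_eq_abs]
      have h3 : |a - b| * ‖w‖ ≤ 5 / 4 * |a - b| := by
        rw [mul_comm]
        exact mul_le_mul_of_nonneg_right hwn (abs_nonneg _)
      linarith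
    have hg0 : g 0 = 0 := by
      simp only [hgdef, zero_smul, add_zero]
      exact infDist_zero_of_mem hxA
    have hgt : 0 < g t := (hA.notMem_iff_infDist_pos hAne).1 hout
    set a := g t with hadef
    have hgcont : Continuous g :=
      (continuous_infDist_pt A).comp (continuous_const.add (continuous_id.smul continuous_const))
    set T : Set ℝ := Icc 0 t ∩ g ⁻¹' (Ici a) with hTdef
    have hTne : T.Nonempty := ⟨t, ⟨ht0, le_refl t⟩, le_refl a⟩
    have hTclosed : IsClosed T := isClosed_Icc.inter (isClosed_Ici.preimage hgcont)
    have hbdd : BddBelow T := ⟨0, fun r hr => hr.1.1⟩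
    set t₁ := sInf T with ht₁def
    have ht₁T : t₁ ∈ T := hTclosed.csInf_mem hTne hbdd
    have ht₁g : a ≤ g t₁ := ht₁T.2
    have ht₁0 : 0 ≤ t₁ := ht₁T.1.1
    have ht₁t : t₁ ≤ t := ht₁T.1.2
    have hlt : ∀ r, 0 ≤ r → r < t₁ → g r < a := by
      intro r h0 hr
      by_contra hcontra
      push_neg at hcontra
      exact absurd (csInf_le hbdd ⟨⟨h0, hr.le.trans ht₁t⟩, hcontra⟩) (not_le.2 hr)
    have hgdef' : ∀ r : ℝ, g r = infDist (x + r • w) A := fun r => rfl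
    clear_value g a T t₁
    by_cases hcase : t₁ ≤ a * c / 24
    · have h1 := hglip t₁ 0
      rw [hg0, sub_zero, abs_of_nonneg ht₁0] at h1
      rw [hadef] at ht₁g
      clear * - hgt hcv hc0 h1 hcase ht₁g hadef
      nlinarith [hgt, hcv, hc0, h1, hcase, ht₁g, hadef]
    · push_neg at hcase
      set h := a * c / 24 with hhdef
      have hh0 : 0 < h := by rw [hhdef]; positivity
      have h5 : g (t₁ - h) < a := hlt _ (by linarith) (by linarith)
      have h6 : g t₁ ≤ g (t₁ - h) + 5 / 4 * h := by
        have := hglip t₁ (t₁ - h)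
        rwa [sub_sub_cancel, abs_of_pos hh0] at this
      have h7 : a / 2 ≤ g (t₁ - h) := by nlinarith [hgt, hcv, hc0]
      have hz'A : x + (t₁ - h) • w ∉ A := by
        intro hmem
        have : g (t₁ - h) = 0 := (hgdef' _).trans (infDist_zero_of_mem hmem)
        nlinarith [hgt]
      have hz'y : dist (x + (t₁ - h) • w) y < δ := by
        calc dist (x + (t₁ - h) • w) y ≤ dist (x + (t₁ - h) • w) x + dist x y :=
              dist_triangle _ _ _
          _ ≤ ‖(t₁ - h) • w‖ + δ / 8 := by
              rw [dist_eq_norm, add_sub_cancel_left]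
              linarith [hxy]
          _ ≤ (t₁ - h) * (5 / 4) + δ / 8 := by
              rw [norm_smul, Real.norm_eq_abs, abs_of_nonneg (by linarith : (0:ℝ) ≤ t₁ - h)]
              nlinarith [hwn, hh0]
          _ < δ := by nlinarith [ht₁t, htδ, hh0, hδ0]
      have hstep : h ≤ c / 3 * infDist (x + (t₁ - h) • w) A := by
        rw [← hgdef' (t₁ - h)]
        nlinarith [h7, hgt, hc0]
      have hd := hdesc w hw _ hz'y hz'A h hh0.le hstep
      have hcomb : x + (t₁ - h) • w + h • w = x + t₁ • w := by
        module
      rw [hcomb] at hd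
      have hgt₁ : g t₁ ≤ g (t₁ - h) - 3 * c / 8 * h := by
        rw [hgdef' t₁, hgdef' (t₁ - h)]; exact hd
      nlinarith [ht₁g, h5, hgt₁, hh0, hc0]
  -- conclusion
  have hsub : ball (-v) (c / 4) ⊆ clarkeTangentCone A y := by
    intro w hw
    intro xs ts hxsA hxsy hts0 htslim
    have hw' : dist w (-v) ≤ c / 4 := (mem_ball.1 hw).le
    have hδ8 : (0:ℝ) < δ / 8 := by linarith
    have hev1 : ∀ᶠ i in atTop, dist (xs i) y ≤ δ / 8 := by
      filter_upwards [hxsy (Metric.closedBall_mem_nhds y hδ8)] with i hi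
      exact mem_closedBall.1 hi
    have hev2 : ∀ᶠ i in atTop, ts i ≤ δ / 8 := by
      filter_upwards [htslim (Iic_mem_nhds hδ8)] with i hi
      exact hi
    refine ⟨fun i => if dist (xs i) y ≤ δ / 8 ∧ ts i ≤ δ / 8 then xs i + (ts i) • w else xs i,
      ?_, ?_⟩
    · intro i; dsimp only; split_ifs with hcond
      · exact hstay w hw' (xs i) (hxsA i) hcond.1 (ts i) (hts0 i).le hcond.2
      · exact hxsA i
    · have : ∀ᶠ i in atTop,
          w = (ts i)⁻¹ • ((if dist (xs i) y ≤ δ / 8 ∧ ts i ≤ δ / 8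
              then xs i + (ts i) • w else xs i) - xs i) := by
        filter_upwards [hev1, hev2] with i h1 h2
        rw [if_pos ⟨h1, h2⟩, add_sub_cancel_left, inv_smul_smul₀ (hts0 i).ne']
      exact Tendsto.congr' this tendsto_const_nhds
  exact ⟨-v, interior_maximal hsub isOpen_ball (mem_ball_self (by positivity))⟩
end
end

section
/- Let (x̄, ū) be a W^{1,1}-local minimizer of problem (P). Then there exists α > 0 such that (x̄, ȳ ≡ 0, ū) is an L∞-local minimizer of the augmented problem (P1): minimize g(x(T)) over x ∈ W^{1,1}([S,T],ℝⁿ), y ∈ W^{1,1}([S,T],ℝ) and measurable u satisfying ẋ(t) = f(t,x(t),u(t)) a.e., ẏ(t) = |f(t,x(t),u(t)) − ẋ̄(t)| a.e., (x(S), y(S), y(T)) ∈ {x₀} × {0} × α𝔹, x(t) ∈ A for all t, u(t) ∈ U(t) a.e.; i.e. there exists ε > 0 such that g(x̄(T)) ≤ g(x(T)) for every process (x,y,u) admissible for (P1) with ‖(x,y) − (x̄,0)‖_{L∞} ≤ ε. -/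
open Set MeasureTheory Filter Topology Metric

noncomputable section

variable {n m : ℕ}

/-- An admissible process `(x, u)` (with `x'` the a.e. derivative of `x`) for the
state constrained optimal control problem (P). -/
def OCAdmissible (S T : ℝ)
    (f : ℝ → EuclideanSpace ℝ (Fin n) → (Fin m → ℝ) → EuclideanSpace ℝ (Fin n))
    (x₀ : EuclideanSpace ℝ (Fin n)) (A : Set (EuclideanSpace ℝ (Fin n)))
    (U : ℝ → Set (Fin m → ℝ))
    (x x' : ℝ → EuclideanSpace ℝ (Fin n)) (u : ℝ → Fin m → ℝ) : Prop :=
  IntegrableOn x' (Icc S T) ∧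
  (∀ t ∈ Icc S T, x t = x₀ + ∫ s in Icc S t, x' s) ∧
  (∀ᵐ t ∂(volume.restrict (Icc S T)), x' t = f t (x t) (u t)) ∧
  (∀ t ∈ Icc S T, x t ∈ A) ∧
  Measurable u ∧
  (∀ᵐ t ∂(volume.restrict (Icc S T)), u t ∈ U t)

/-- An admissible process `(x, y, u)` for the augmented problem (P1), with extra state
equation `ẏ(t) = |f(t,x(t),u(t)) - ẋ̄(t)|`, `y(S) = 0` and terminal constraint `y(T) ∈ α𝔹`. -/
def OCAugAdmissible (S T : ℝ)
    (f : ℝ → EuclideanSpace ℝ (Fin n) → (Fin m → ℝ) → EuclideanSpace ℝ (Fin n))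
    (x₀ : EuclideanSpace ℝ (Fin n)) (A : Set (EuclideanSpace ℝ (Fin n)))
    (U : ℝ → Set (Fin m → ℝ)) (xb' : ℝ → EuclideanSpace ℝ (Fin n)) (α : ℝ)
    (x x' : ℝ → EuclideanSpace ℝ (Fin n)) (y y' : ℝ → ℝ) (u : ℝ → Fin m → ℝ) : Prop :=
  IntegrableOn x' (Icc S T) ∧
  (∀ t ∈ Icc S T, x t = x₀ + ∫ s in Icc S t, x' s) ∧
  IntegrableOn y' (Icc S T) ∧
  (∀ t ∈ Icc S T, y t = ∫ s in Icc S t, y' s) ∧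
  (∀ᵐ t ∂(volume.restrict (Icc S T)), x' t = f t (x t) (u t)) ∧
  (∀ᵐ t ∂(volume.restrict (Icc S T)), y' t = ‖f t (x t) (u t) - xb' t‖) ∧
  (y S = 0) ∧ (|y T| ≤ α) ∧
  (∀ t ∈ Icc S T, x t ∈ A) ∧
  Measurable u ∧
  (∀ᵐ t ∂(volume.restrict (Icc S T)), u t ∈ U t)

/-- If `(x̄, ū)` is a `W^{1,1}`-local minimizer of (P), then there is `α > 0` such that
`(x̄, ȳ ≡ 0, ū)` is an `L^∞`-local minimizer of the augmented problem (P1). -/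
theorem W11_local_min_is_Linf_local_min_augmented
    (S T : ℝ) (hST : S < T)
    (g : EuclideanSpace ℝ (Fin n) → ℝ)
    (f : ℝ → EuclideanSpace ℝ (Fin n) → (Fin m → ℝ) → EuclideanSpace ℝ (Fin n))
    (x₀ : EuclideanSpace ℝ (Fin n)) (A : Set (EuclideanSpace ℝ (Fin n)))
    (U : ℝ → Set (Fin m → ℝ))
    (xb xb' : ℝ → EuclideanSpace ℝ (Fin n)) (ub : ℝ → Fin m → ℝ)
    (hadm : OCAdmissible S T f x₀ A U xb xb' ub)
    (hmin : ∃ ε > (0 : ℝ), ∀ x x' u, OCAdmissible S T f x₀ A U x x' u →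
      ‖x S - xb S‖ + ∫ t in Icc S T, ‖x' t - xb' t‖ ≤ ε → g (xb T) ≤ g (x T)) :
    ∃ α > (0 : ℝ), ∃ ε > (0 : ℝ),
      ∀ x x' y y' u, OCAugAdmissible S T f x₀ A U xb' α x x' y y' u →
        (∀ t ∈ Icc S T, ‖x t - xb t‖ ≤ ε ∧ |y t| ≤ ε) →
        g (xb T) ≤ g (x T) := by
  obtain ⟨ε, hε, hm⟩ := hmin
  refine ⟨ε, hε, 1, one_pos, ?_⟩
  rintro x x' y y' u ⟨h1, h2, h3, h4, h5, h6, h7, h8, h9, h10, h11⟩ _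
  have hSmem : S ∈ Icc S T := ⟨le_refl S, hST.le⟩
  have hTmem : T ∈ Icc S T := ⟨hST.le, le_refl T⟩
  -- initial points coincide
  have hIcc0 : volume (Icc S S) = 0 := by
    simp [Icc_self]
  have hxS : x S = x₀ := by
    have := h2 S hSmem
    rw [this, Measure.restrict_eq_zero.mpr hIcc0, integral_zero_measure, add_zero]
  have hxbS : xb S = x₀ := by
    obtain ⟨hb1, hb2, _⟩ := hadm
    have := hb2 S hSmem
    rw [this, Measure.restrict_eq_zero.mpr hIcc0, integral_zero_measure, add_zero]
  -- the integral of ‖x' - xb'‖ equals y T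
  have hcong : ∀ᵐ t ∂(volume.restrict (Icc S T)), ‖x' t - xb' t‖ = y' t := by
    filter_upwards [h5, h6] with t ht5 ht6
    rw [ht5, ht6]
  have hint : (∫ t in Icc S T, ‖x' t - xb' t‖) = y T := by
    rw [h4 T hTmem]
    exact integral_congr_ae hcong
  have hyT : y T ≤ ε := le_trans (le_abs_self _) h8
  refine hm x x' u ⟨h1, h2, h5, h9, h10, h11⟩ ?_
  rw [hxS, hxbS, sub_self, norm_zero, zero_add, hint]
  exact hyT
end
end
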